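/- With T, a, b, a_0, b_0, s and σ_{a,b} as follows — a_0, b_0 are new symbols with the edge colors of a and b respectively, s(a_0) = (1,0), s(b_0) = (−1,0), s(t) = (0,0) for t ∈ T, and σ_{a,b} is the two-dimensional substitution on A = T ∪ {a_0,b_0} with base rule t ↦ {[(0,0),t]} and rules (t,t',(1,0)) ↦ (2,0) + s(t') − s(t) for every horizontally matching pair (t,t') ∈ A² except (a_0,b_0), and (t,t',(0,1)) ↦ (0,1) + s(t') − s(t) for every vertically matching pair (t,t') ∈ A² — the substitution σ_{a,b} is overlapping if and only if T admits a valid tiling of a cycle in which some two consecutive tiles are copies of a and b with the copy of b placed at the position immediately to the right of the copy of a. -/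

import Mathlib

open scoped Classical

/-- A combinatorial substitution on alphabet `A` with vectors in `V`:
a base rule sending each letter to a pattern, together with a deterministic
finite set of concatenation rules.  `rule t t' u = some v` encodes the
concatenation rule `(t, t', u) ↦ v`. -/
structure Subst (A : Type*) (V : Type*) [AddCommGroup V] where
  /-- the base rule -/
  base : A → Finset (V × A)
  /-- the image of a letter is a pattern: its cells have distinct vectors -/
  basePat : ∀ t : A, ∀ c ∈ base t, ∀ c' ∈ base t, c.1 = c'.1 → c = c'
  /-- the concatenation rules, as a partial function -/
  rule : A → A → V → Option V
  /-- there are finitely many concatenation rules -/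
  finiteRules : {u : V | ∃ t t', rule t t' u ≠ none}.Finite
  /-- determinism: no two rules with left-hand sides `(t,t',u)` and `(t,t',-u)` -/
  det : ∀ t t' u, (rule t t' u).isSome → (rule t t' (-u)).isSome → u = -u

/-- A pattern is a finite set of cells with pairwise distinct vectors. -/
def IsPattern {V A : Type*} (P : Finset (V × A)) : Prop :=
  ∀ c ∈ P, ∀ c' ∈ P, c.1 = c'.1 → c = c'

namespace Subst

variable {A V : Type*} [AddCommGroup V]

/-- `σ_rule(c, c')`: the relative position of the images of the two cells
`c`, `c'`, when some concatenation rule applies to them. -/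
def ruleVec (σ : Subst A V) (c c' : V × A) : Option V :=
  match σ.rule c.2 c'.2 (c'.1 - c.1) with
  | some v => some v
  | none => (σ.rule c'.2 c.2 (c.1 - c'.1)).map (fun v => -v)

/-- The image vector `ω_σ(γ)` of a path `γ`. -/
def omega (σ : Subst A V) (γ : List (V × A)) : V :=
  ((γ.zip γ.tail).map (fun p => (σ.ruleVec p.1 p.2).getD 0)).sum

/-- A `C_σ`-path: a nonempty sequence of cells in which any two consecutive
cells form a translated copy of a starting pattern of `σ`, and any two cells
with the same vector are equal. -/
def IsPath (σ : Subst A V) (γ : List (V × A)) : Prop :=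
  γ ≠ [] ∧ γ.Chain' (fun c c' => (σ.ruleVec c c').isSome) ∧
    ∀ c ∈ γ, ∀ c' ∈ γ, c.1 = c'.1 → c = c'

/-- A `C_σ`-path of the pattern `P`. -/
def IsPathOf (σ : Subst A V) (P : Finset (V × A)) (γ : List (V × A)) : Prop :=
  σ.IsPath γ ∧ ∀ c ∈ γ, c ∈ P

/-- A `C_σ`-loop of the pattern `P`. -/
def IsLoopOf (σ : Subst A V) (P : Finset (V × A)) (γ : List (V × A)) : Prop :=
  σ.IsPathOf P γ ∧ γ.head? = γ.getLast?

/-- `P` is `C_σ`-covered: any two of its cells are joined by a `C_σ`-path of `P`. -/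
def Covered (σ : Subst A V) (P : Finset (V × A)) : Prop :=
  ∀ c ∈ P, ∀ c' ∈ P,
    ∃ γ, σ.IsPathOf P γ ∧ γ.head? = some c ∧ γ.getLast? = some c'

/-- `σ` is consistent on `P`: any two `C_σ`-paths of `P` with the same first
and last cells have the same image vector. -/
def ConsistentOn (σ : Subst A V) (P : Finset (V × A)) : Prop :=
  ∀ γ γ' : List (V × A), σ.IsPathOf P γ → σ.IsPathOf P γ' →
    γ.head? = γ'.head? → γ.getLast? = γ'.getLast? → σ.omega γ = σ.omega γ'

/-- `σ` is consistent: it is consistent on every `C_σ`-covered pattern. -/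
def Consistent (σ : Subst A V) : Prop :=
  ∀ P : Finset (V × A), IsPattern P → σ.Covered P → σ.ConsistentOn P

/-- The support of the image of a letter. -/
noncomputable def supp (σ : Subst A V) (t : A) : Finset V :=
  (σ.base t).image Prod.fst

/-- `σ` is non-overlapping on `P`: the images of two distinct cells of `P`
joined by a `C_σ`-path of `P` have disjoint supports. -/
def NonOverlappingOn (σ : Subst A V) (P : Finset (V × A)) : Prop :=
  ∀ c ∈ P, ∀ c' ∈ P, c ≠ c' → ∀ γ, σ.IsPathOf P γ →
    γ.head? = some c → γ.getLast? = some c' →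
    ∀ b ∈ σ.supp c'.2, σ.omega γ + b ∉ σ.supp c.2

/-- `σ` is non-overlapping: it is non-overlapping on every `C_σ`-covered pattern. -/
def NonOverlapping (σ : Subst A V) : Prop :=
  ∀ P : Finset (V × A), IsPattern P → σ.Covered P → σ.NonOverlappingOn P

end Subst

/-- A Wang tile: a unit square with a color on each of its four edges. -/
structure WangTile (C : Type*) where
  north : C
  south : C
  east : C
  west : C

/-- The alphabet `A = T ∪ {a₀, b₀}`: Wang tiles together with the two new
symbols `a₀` and `b₀`. -/
inductive LetterAB (C : Type*) : Type _ where
  | tile : WangTile C → LetterAB C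
  | a0 : LetterAB C
  | b0 : LetterAB C

/-- The Wang tile carried by a letter: `a₀` has the edge colors of `a` and
`b₀` has the edge colors of `b`. -/
def LetterAB.toTile {C : Type*} (a b : WangTile C) : LetterAB C → WangTile C
  | .tile t => t
  | .a0 => a
  | .b0 => b

/-- Membership of a letter in `A = T ∪ {a₀, b₀}`. -/
def LetterAB.inA {C : Type*} (T : Finset (WangTile C)) : LetterAB C → Prop
  | .tile t => t ∈ T
  | .a0 => True
  | .b0 => True

/-- The shift `s`: `s a₀ = (1,0)`, `s b₀ = (-1,0)`, `s t = (0,0)` otherwise. -/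
def sfun {C : Type*} : LetterAB C → ℤ × ℤ
  | .tile _ => (0, 0)
  | .a0 => (1, 0)
  | .b0 => (-1, 0)

/-- The substitution `σ_{a,b}`: horizontal rules
`(t, t', (1,0)) ↦ (2,0) + s t' - s t` for all horizontally matching pairs
except `(a₀, b₀)`, and vertical rules `(t, t', (0,1)) ↦ (0,1) + s t' - s t`
for all vertically matching pairs. -/
noncomputable def sigmaAB {C : Type*} (T : Finset (WangTile C))
    (a b : WangTile C) : Subst (LetterAB C) (ℤ × ℤ) where
  base t := {((0, 0), t)}
  basePat := by
    intro t c hc c' hc' _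
    rw [Finset.mem_singleton] at hc hc'
    rw [hc, hc']
  rule t t' u :=
    if u = ((1 : ℤ), (0 : ℤ)) ∧ LetterAB.inA T t ∧ LetterAB.inA T t' ∧
        (LetterAB.toTile a b t).east = (LetterAB.toTile a b t').west ∧
        ¬(t = LetterAB.a0 ∧ t' = LetterAB.b0)
    then some (((2 : ℤ), (0 : ℤ)) + sfun t' - sfun t)
    else if u = ((0 : ℤ), (1 : ℤ)) ∧ LetterAB.inA T t ∧ LetterAB.inA T t' ∧
        (LetterAB.toTile a b t).north = (LetterAB.toTile a b t').south
    then some (((0 : ℤ), (1 : ℤ)) + sfun t' - sfun t)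
    else none
  finiteRules := by
    apply Set.Finite.subset
      ((Set.finite_singleton ((0, 1) : ℤ × ℤ)).insert ((1, 0) : ℤ × ℤ))
    rintro u ⟨t, t', h⟩
    try simp only at h
    split_ifs at h with h1 h2
    · exact Set.mem_insert_iff.2 (Or.inl h1.1)
    · exact Set.mem_insert_iff.2 (Or.inr h2.1)
    · exact absurd rfl h
  det := by
    intro t t' u h1 h2
    exfalso
    try simp only at h1 h2
    have hu : u = ((1 : ℤ), (0 : ℤ)) ∨ u = ((0 : ℤ), (1 : ℤ)) := by
      split_ifs at h1 with hA hB
      · exact Or.inl hA.1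
      · exact Or.inr hB.1
      · simp at h1
    have hnu : -u = ((1 : ℤ), (0 : ℤ)) ∨ -u = ((0 : ℤ), (1 : ℤ)) := by
      split_ifs at h2 with hC hD
      · exact Or.inl hC.1
      · exact Or.inr hD.1
      · simp at h2
    rcases hu with rfl | rfl <;> rcases hnu with h | h <;> revert h <;> decide

/-- The colors of the Wang tiles `a` and `b` agree on the shared edge when
`b` is placed at position `u` relative to `a`. -/
def WangMatch {C : Type*} (a b : WangTile C) (u : ℤ × ℤ) : Prop :=
  (u = (1, 0) ∧ a.east = b.west) ∨ (u = (-1, 0) ∧ a.west = b.east) ∨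
  (u = (0, 1) ∧ a.north = b.south) ∨ (u = (0, -1) ∧ a.south = b.north)

/-- `T` admits a valid tiling of a cycle in which some two consecutive tiles
are copies of `a` and `b`, the copy of `b` placed immediately to the right
of the copy of `a`. -/
def AdmitsCycleWith {C : Type*} (T : Finset (WangTile C))
    (a b : WangTile C) : Prop :=
  ∃ (n : ℕ) (t : ℕ → WangTile C) (p : ℕ → ℤ × ℤ),
    5 ≤ n ∧ (∀ i < n, t i ∈ T) ∧
    (∀ i < n - 1, ∀ j < n - 1, p i = p j → i = j) ∧
    p (n - 1) = p 0 ∧ t (n - 1) = t 0 ∧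
    (∀ i < n - 1, WangMatch (t i) (t (i + 1)) (p (i + 1) - p i)) ∧
    ∃ i < n - 1, t i = a ∧ t (i + 1) = b ∧ p (i + 1) = p i + (1, 0)

/-!
Every rule vector of `σ_{a,b}` is a difference of the potential
`π[v, t] = (2 v₁ + s(t)₁, v₂)`, so the image vector of a path is `π(last) - π(first)`. Two
distinct cells of a pattern have the same potential only if they are `a₀` at some `v` and `b₀` at
`v + (1, 0)`; hence `σ_{a,b}` is overlapping iff some covered pattern contains such a pair. Cells
joined by a rule are exactly matching neighbours, and no rule joins that pair directly, so a
simple path from the `b₀` to the `a₀`, closed by the step from `a₀` to `b₀`, is a tiling of a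
cycle with `b` right of `a`. Conversely, relabelling the copies of `a` and `b` in such a cycle as
`a₀` and `b₀` yields a covered pattern containing the pair.
-/

theorem List.exists_infix_or_reverse_infix {α : Type*} {l : List α} {c c' : α} (hc : c ∈ l)
    (hc' : c' ∈ l) :
    ∃ δ : List α, (δ <:+: l ∨ δ.reverse <:+: l) ∧ δ.head? = some c ∧ δ.getLast? = some c' := by
  obtain ⟨s, t, rfl⟩ := List.append_of_mem hc
  rcases List.mem_append.1 hc' with h | h
  · obtain ⟨u, w, rfl⟩ := List.append_of_mem h
    refine ⟨(c' :: w ++ [c]).reverse, Or.inr ⟨u, t, by simp⟩, by simp, ?_⟩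
    rw [List.getLast?_reverse]
    rfl
  rcases List.mem_cons.1 h with rfl | h
  · exact ⟨[c'], Or.inl ⟨s, t, by simp⟩, rfl, rfl⟩
  · obtain ⟨u, w, rfl⟩ := List.append_of_mem h
    exact ⟨c :: u ++ [c'], Or.inl ⟨s, w, by simp⟩, rfl, List.getLast?_concat⟩

namespace Subst

variable {A V : Type*} [AddCommGroup V] (σ : Subst A V)

theorem ruleVec_isSome_iff {x y : V × A} :
    (σ.ruleVec x y).isSome ↔
      (σ.rule x.2 y.2 (y.1 - x.1)).isSome ∨ (σ.rule y.2 x.2 (x.1 - y.1)).isSome := by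
  unfold ruleVec
  cases σ.rule x.2 y.2 (y.1 - x.1) <;> simp

theorem ruleVec_isSome_comm {x y : V × A} :
    (σ.ruleVec x y).isSome ↔ (σ.ruleVec y x).isSome := by
  rw [ruleVec_isSome_iff, ruleVec_isSome_iff, or_comm]

theorem omega_cons_cons (x y : V × A) (γ : List (V × A)) :
    σ.omega (x :: y :: γ) = (σ.ruleVec x y).getD 0 + σ.omega (y :: γ) := by
  simp [omega]

variable {σ}

theorem IsPath.isChain {γ : List (V × A)} (h : σ.IsPath γ) :
    γ.IsChain fun x y => (σ.ruleVec x y).isSome :=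
  h.2.1

section Potential

variable {g : V × A → V}
  (hg : ∀ t t' u v w, σ.rule t t' u = some v → v = g (w + u, t') - g (w, t))
include hg

theorem ruleVec_getD_eq_sub {x y : V × A} (h : (σ.ruleVec x y).isSome) :
    (σ.ruleVec x y).getD 0 = g y - g x := by
  obtain ⟨v, hv⟩ := Option.isSome_iff_exists.1 h
  rw [hv, Option.getD_some]
  unfold ruleVec at hv
  cases hxy : σ.rule x.2 y.2 (y.1 - x.1) with
  | some v' =>
    simp only [hxy, Option.some.injEq] at hv
    simpa [hv] using hg _ _ _ _ x.1 hxy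
  | none =>
    simp only [hxy, Option.map_eq_some_iff] at hv
    obtain ⟨v', hyx, rfl⟩ := hv
    simpa using congrArg Neg.neg (hg _ _ _ _ y.1 hyx)

theorem omega_eq_sub {γ : List (V × A)} (hγ : γ.IsChain fun x y => (σ.ruleVec x y).isSome)
    {c c' : V × A} (hc : γ.head? = some c) (hc' : γ.getLast? = some c') :
    σ.omega γ = g c' - g c := by
  induction hγ generalizing c with
  | nil => simp at hc
  | singleton x =>
    simp_all [omega]
  | @cons_cons x y l hxy _ ih =>
    simp only [List.head?_cons, Option.some.injEq] at hc
    rw [omega_cons_cons, ruleVec_getD_eq_sub hg hxy, ih rfl (by simpa using hc'), hc]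
    abel

end Potential

theorem IsPath.reverse {γ : List (V × A)} (h : σ.IsPath γ) : σ.IsPath γ.reverse := by
  obtain ⟨hne, hchain, hinj⟩ := h
  refine ⟨by simpa using hne, List.isChain_reverse.2 ?_,
    fun c hc c' hc' => hinj c (by simpa using hc) c' (by simpa using hc')⟩
  exact hchain.imp fun _ _ => σ.ruleVec_isSome_comm.1

theorem IsPath.infix {γ γ' : List (V × A)} (h : σ.IsPath γ) (hγ' : γ' <:+: γ) (hne : γ' ≠ []) :
    σ.IsPath γ' :=
  ⟨hne, h.isChain.infix hγ', fun c hc c' hc' => h.2.2 c (hγ'.subset hc) c' (hγ'.subset hc')⟩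

theorem covered_toFinset [DecidableEq (V × A)] {γ : List (V × A)} (h : σ.IsPath γ) :
    σ.Covered γ.toFinset := by
  intro c hc c' hc'
  obtain ⟨δ, hδ | hδ, hhead, hlast⟩ :=
    List.exists_infix_or_reverse_infix (List.mem_toFinset.1 hc) (List.mem_toFinset.1 hc')
  · refine ⟨δ, ⟨h.infix hδ ?_, fun x hx => List.mem_toFinset.2 (hδ.subset hx)⟩, hhead, hlast⟩
    rintro rfl
    simp at hhead
  · refine ⟨δ, ⟨?_, fun x hx => List.mem_toFinset.2 (hδ.subset (List.mem_reverse.2 hx))⟩,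
      hhead, hlast⟩
    simpa using (h.infix hδ (by rintro h; simp_all)).reverse

theorem IsPath.exists_nodup {γ : List (V × A)} (h : σ.IsPath γ) :
    ∃ δ, σ.IsPath δ ∧ δ.Nodup ∧ δ.head? = γ.head? ∧ δ.getLast? = γ.getLast? := by
  obtain ⟨c, γ', rfl⟩ := List.exists_cons_of_ne_nil h.1
  let G := SimpleGraph.fromRel fun x y => x ∈ c :: γ' ∧ y ∈ c :: γ' ∧ (σ.ruleVec x y).isSome
  have hG : ∀ x y, G.Adj x y → y ∈ c :: γ' ∧ (σ.ruleVec x y).isSome := by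
    rintro x y ⟨-, ⟨-, hy, hxy⟩ | ⟨hy, -, hyx⟩⟩
    · exact ⟨hy, hxy⟩
    · exact ⟨hy, σ.ruleVec_isSome_comm.1 hyx⟩
  have hreach : G.Reachable c ((c :: γ').getLast (List.cons_ne_nil c γ')) := by
    rw [SimpleGraph.reachable_iff_reflTransGen, ← Relation.reflTransGen_reflGen]
    refine List.relationReflTransGen_of_exists_isChain_cons γ' ?_ rfl
    refine (List.IsChain.iff_mem.1 h.isChain).imp fun x y ⟨hx, hy, hxy⟩ => ?_
    by_cases hne : x = y
    · exact hne ▸ Relation.ReflGen.refl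
    · exact .single ((SimpleGraph.fromRel_adj _ x y).2 ⟨hne, Or.inl ⟨hx, hy, hxy⟩⟩)
  obtain ⟨p, hp⟩ := hreach.exists_isPath
  have hsub : p.support ⊆ c :: γ' := by
    refine fun x => List.IsChain.induction (· ∈ c :: γ') _ p.isChain_adj_support
      (fun x y hxy _ => (hG x y hxy).1) (fun _ => ?_) x
    rw [SimpleGraph.Walk.head_support]
    exact List.mem_cons_self
  refine ⟨p.support, ⟨p.support_ne_nil, p.isChain_adj_support.imp fun x y hxy => (hG x y hxy).2,
    fun x hx y hy => h.2.2 x (hsub hx) y (hsub hy)⟩, hp.support_nodup, ?_, ?_⟩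
  · rw [List.head?_eq_some_head p.support_ne_nil, SimpleGraph.Walk.head_support]
    rfl
  · rw [List.getLast?_eq_some_getLast p.support_ne_nil, SimpleGraph.Walk.getLast_support,
      List.getLast?_eq_some_getLast (List.cons_ne_nil c γ')]

end Subst

section

variable {C : Type*} {T : Finset (WangTile C)} {a b : WangTile C}

theorem sigmaAB_rule_isSome_iff {t t' : LetterAB C} {u : ℤ × ℤ} :
    ((sigmaAB T a b).rule t t' u).isSome ↔
      (u = (1, 0) ∧ t.inA T ∧ t'.inA T ∧ (t.toTile a b).east = (t'.toTile a b).west ∧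
        ¬(t = .a0 ∧ t' = .b0)) ∨
      (u = (0, 1) ∧ t.inA T ∧ t'.inA T ∧ (t.toTile a b).north = (t'.toTile a b).south) := by
  simp only [sigmaAB]
  split_ifs <;> simp_all only [Option.isSome_some, Option.isSome_none, true_iff] <;> tauto

theorem sigmaAB_ruleVec_isSome_iff {x y : (ℤ × ℤ) × LetterAB C} :
    ((sigmaAB T a b).ruleVec x y).isSome ↔
      x.2.inA T ∧ y.2.inA T ∧ WangMatch (x.2.toTile a b) (y.2.toTile a b) (y.1 - x.1) ∧
        ¬(x.2 = .a0 ∧ y.2 = .b0 ∧ y.1 - x.1 = (1, 0)) ∧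
        ¬(x.2 = .b0 ∧ y.2 = .a0 ∧ y.1 - x.1 = (-1, 0)) := by
  rw [Subst.ruleVec_isSome_iff, sigmaAB_rule_isSome_iff, sigmaAB_rule_isSome_iff,
    ← neg_sub y.1 x.1, neg_eq_iff_eq_neg, neg_eq_iff_eq_neg]
  generalize y.1 - x.1 = u
  unfold WangMatch
  by_cases hu : u = (1, 0) ∨ u = (-1, 0) ∨ u = (0, 1) ∨ u = (0, -1)
  · rcases hu with rfl | rfl | rfl | rfl <;> simp <;> tauto
  · simp only [not_or] at hu
    simp [hu.1, hu.2.1, hu.2.2.1, hu.2.2.2]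

/-- `σ_{a,b}` places the image of the cell `[v, t]` at `(2 v₁ + s(t)₁, v₂)`. -/
def potential (c : (ℤ × ℤ) × LetterAB C) : ℤ × ℤ :=
  (2 * c.1.1 + (sfun c.2).1, c.1.2)

theorem sigmaAB_rule_eq_potential_sub {t t' : LetterAB C} {u v : ℤ × ℤ}
    (h : (sigmaAB T a b).rule t t' u = some v) (w : ℤ × ℤ) :
    v = potential (w + u, t') - potential (w, t) := by
  simp only [sigmaAB] at h
  split_ifs at h with h₁ h₂
  · obtain ⟨rfl, -⟩ := h₁
    cases h
    cases t <;> cases t' <;> simp [potential, sfun, Prod.ext_iff] <;> ring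
  · obtain ⟨rfl, -⟩ := h₂
    cases h
    cases t <;> cases t' <;> simp [potential, sfun]

theorem sigmaAB_omega_eq {γ : List ((ℤ × ℤ) × LetterAB C)}
    (hγ : γ.IsChain fun x y => ((sigmaAB T a b).ruleVec x y).isSome)
    {c c' : (ℤ × ℤ) × LetterAB C} (hc : γ.head? = some c) (hc' : γ.getLast? = some c') :
    (sigmaAB T a b).omega γ = potential c' - potential c :=
  Subst.omega_eq_sub (fun _ _ _ _ w h => sigmaAB_rule_eq_potential_sub h w) hγ hc hc'

theorem sigmaAB_supp (t : LetterAB C) : (sigmaAB T a b).supp t = {0} := by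
  simp [Subst.supp, sigmaAB]

theorem exists_a0_b0_of_potential_eq {P : Finset ((ℤ × ℤ) × LetterAB C)} (hP : IsPattern P)
    {c c' : (ℤ × ℤ) × LetterAB C} (hc : c ∈ P) (hc' : c' ∈ P) (hne : c ≠ c')
    (h : potential c = potential c') :
    ∃ v : ℤ × ℤ, (v, .a0) ∈ P ∧ (v + (1, 0), .b0) ∈ P := by
  have hpos : c.1 ≠ c'.1 := fun h => hne (hP c hc c' hc' h)
  obtain ⟨⟨x₁, x₂⟩, t⟩ := c
  obtain ⟨⟨y₁, y₂⟩, t'⟩ := c'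
  simp only [potential, Prod.mk.injEq, ne_eq] at h hpos
  cases t <;> cases t' <;> simp only [sfun] at h
  all_goals first
    | omega
    | exact ⟨(x₁, x₂), hc, by convert hc' using 3 <;> simp <;> omega⟩
    | exact ⟨(y₁, y₂), hc', by convert hc using 3 <;> simp <;> omega⟩

theorem sigmaAB_not_nonOverlapping_iff :
    ¬ (sigmaAB T a b).NonOverlapping ↔
      ∃ P : Finset ((ℤ × ℤ) × LetterAB C), IsPattern P ∧ (sigmaAB T a b).Covered P ∧
        ∃ v : ℤ × ℤ, (v, .a0) ∈ P ∧ (v + (1, 0), .b0) ∈ P := by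
  simp only [Subst.NonOverlapping, Subst.NonOverlappingOn, sigmaAB_supp, Finset.mem_singleton,
    forall_eq, add_zero, not_forall, not_not, exists_prop]
  constructor
  · rintro ⟨P, hP, hcov, c, hc, c', hc', hne, γ, hγ, hhead, hlast, hω⟩
    refine ⟨P, hP, hcov, exists_a0_b0_of_potential_eq hP hc' hc hne.symm ?_⟩
    rw [← sub_eq_zero, ← sigmaAB_omega_eq hγ.1.isChain hhead hlast, hω]
  · rintro ⟨P, hP, hcov, v, ha, hb⟩
    obtain ⟨γ, hγ, hhead, hlast⟩ := hcov _ hb _ ha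
    refine ⟨P, hP, hcov, _, hb, _, ha, by simp, γ, hγ, hhead, hlast, ?_⟩
    rw [sigmaAB_omega_eq hγ.1.isChain hhead hlast, sub_eq_zero]
    simp [potential, sfun]
    ring

structure IsTileCycle (T : Finset (WangTile C)) (n : ℕ) (t : ℕ → WangTile C)
    (p : ℕ → ℤ × ℤ) : Prop where
  five_le : 5 ≤ n
  mem : ∀ i < n, t i ∈ T
  pos_inj : ∀ i < n - 1, ∀ j < n - 1, p i = p j → i = j
  pos_last : p (n - 1) = p 0
  tile_last : t (n - 1) = t 0
  wangMatch : ∀ i < n - 1, WangMatch (t i) (t (i + 1)) (p (i + 1) - p i)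

namespace IsTileCycle

variable {n : ℕ} {t : ℕ → WangTile C} {p : ℕ → ℤ × ℤ}

theorem tile_mod (h : IsTileCycle T n t p) {j : ℕ} (hj : j ≤ n - 1) : t (j % (n - 1)) = t j := by
  rcases hj.lt_or_eq with hj | rfl
  · rw [Nat.mod_eq_of_lt hj]
  · rw [Nat.mod_self, h.tile_last]

theorem pos_mod (h : IsTileCycle T n t p) {j : ℕ} (hj : j ≤ n - 1) : p (j % (n - 1)) = p j := by
  rcases hj.lt_or_eq with hj | rfl
  · rw [Nat.mod_eq_of_lt hj]
  · rw [Nat.mod_self, h.pos_last]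

theorem rotate (h : IsTileCycle T n t p) (k : ℕ) :
    IsTileCycle T n (fun j => t ((j + k) % (n - 1))) (fun j => p ((j + k) % (n - 1))) := by
  have hm : 0 < n - 1 := by have := h.five_le; omega
  refine ⟨h.five_le, fun i _ => h.mem _ (by have := Nat.mod_lt (i + k) hm; omega), ?_, ?_, ?_, ?_⟩
  · intro i hi j hj hij
    have := h.pos_inj _ (Nat.mod_lt _ hm) _ (Nat.mod_lt _ hm) hij
    rw [← Nat.mod_eq_of_lt hi, ← Nat.mod_eq_of_lt hj]
    exact Nat.ModEq.add_right_cancel' k this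
  · simp
  · simp
  · intro i _
    have hr := Nat.mod_lt (i + k) hm
    rw [show i + 1 + k = i + k + 1 by ring, ← Nat.mod_add_mod (i + k), h.tile_mod hr,
      h.pos_mod hr]
    exact h.wangMatch _ hr

end IsTileCycle

theorem admitsCycleWith_iff :
    AdmitsCycleWith T a b ↔
      ∃ n t p, IsTileCycle T n t p ∧ t 0 = a ∧ t 1 = b ∧ p 1 = p 0 + (1, 0) := by
  constructor
  · rintro ⟨n, t, p, h5, hT, hinj, hp, ht, hm, i, hi, ha, hb, hab⟩
    have hc : IsTileCycle T n t p := ⟨h5, hT, hinj, hp, ht, hm⟩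
    refine ⟨n, _, _, hc.rotate i, ?_, ?_, ?_⟩
    · simpa [Nat.mod_eq_of_lt hi] using ha
    · simpa [add_comm 1 i, hc.tile_mod hi] using hb
    · simpa [add_comm 1 i, hc.pos_mod hi, Nat.mod_eq_of_lt hi] using hab
  · rintro ⟨n, t, p, ⟨h5, hT, hinj, hp, ht, hm⟩, ha, hb, hab⟩
    exact ⟨n, t, p, h5, hT, hinj, hp, ht, hm, 0, by omega, ha, hb, hab⟩

theorem isTileCycle_of_list {l : List ((ℤ × ℤ) × WangTile C)} (d : (ℤ × ℤ) × WangTile C)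
    (hlen : 5 ≤ l.length) (hmem : ∀ x ∈ l, x.2 ∈ T) (hnodup : (l.dropLast.map Prod.fst).Nodup)
    (hclosed : l.getLast? = l.head?)
    (hchain : l.IsChain fun x y => WangMatch x.2 y.2 (y.1 - x.1)) :
    IsTileCycle T l.length (fun j => (l.getD j d).2) (fun j => (l.getD j d).1) := by
  have hlast : l.getD (l.length - 1) d = l.getD 0 d := by
    rw [List.getD_eq_getElem?_getD, List.getD_eq_getElem?_getD, ← List.getLast?_eq_getElem?,
      hclosed, List.head?_eq_getElem?]
  refine ⟨hlen, fun i hi => ?_, fun i hi j hj hij => ?_, by rw [hlast], by rw [hlast],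
    fun i hi => ?_⟩
  · rw [List.getD_eq_getElem _ _ hi]
    exact hmem _ (List.getElem_mem hi)
  · rw [List.getD_eq_getElem _ _ (by omega), List.getD_eq_getElem _ _ (by omega)] at hij
    have := (hnodup.getElem_inj_iff (i := i) (j := j) (hi := by simpa using hi)
      (hj := by simpa using hj)).1
    simpa using this (by simpa using hij)
  · rw [List.getD_eq_getElem _ _ (by omega), List.getD_eq_getElem _ _ (by omega)]
    exact List.isChain_iff_getElem.1 hchain i (by omega)

theorem WangMatch.eq_unit {s t : WangTile C} {u : ℤ × ℤ} (h : WangMatch s t u) :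
    u = (1, 0) ∨ u = (-1, 0) ∨ u = (0, 1) ∨ u = (0, -1) := by
  rcases h with ⟨rfl, -⟩ | ⟨rfl, -⟩ | ⟨rfl, -⟩ | ⟨rfl, -⟩ <;> simp

theorem four_le_length_of_isPath {γ : List ((ℤ × ℤ) × LetterAB C)} {v : ℤ × ℤ}
    (hγ : (sigmaAB T a b).IsPath γ) (hhead : γ.head? = some (v + (1, 0), .b0))
    (hlast : γ.getLast? = some (v, .a0)) : 4 ≤ γ.length := by
  obtain ⟨γ', rfl⟩ : ∃ γ', γ = (v + (1, 0), .b0) :: γ' := by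
    cases γ <;> simp_all
  have hchain := hγ.isChain
  rcases γ' with _ | ⟨x, _ | ⟨y, _ | ⟨z, γ''⟩⟩⟩
  · simp at hlast
  · simp only [List.getLast?_cons_cons, List.getLast?_singleton, Option.some.injEq] at hlast
    subst hlast
    simp [sigmaAB_ruleVec_isSome_iff] at hchain
  · simp only [List.getLast?_cons_cons, List.getLast?_singleton, Option.some.injEq] at hlast
    subst hlast
    simp only [List.isChain_cons_cons, sigmaAB_ruleVec_isSome_iff] at hchain
    have h₁ := hchain.1.2.2.1.eq_unit
    have h₂ := hchain.2.1.2.2.1.eq_unit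
    simp only [Prod.ext_iff, Prod.fst_sub, Prod.snd_sub, Prod.fst_add, Prod.snd_add] at h₁ h₂
    omega
  · simp

theorem LetterAB.toTile_mem (ha : a ∈ T) (hb : b ∈ T) {t : LetterAB C} (ht : t.inA T) :
    t.toTile a b ∈ T := by
  cases t with
  | tile w => exact ht
  | a0 => exact ha
  | b0 => exact hb

theorem admitsCycleWith_of_isPath (ha : a ∈ T) (hb : b ∈ T) (hab : a.east = b.west)
    {γ : List ((ℤ × ℤ) × LetterAB C)} {v : ℤ × ℤ} (hγ : (sigmaAB T a b).IsPath γ)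
    (hnodup : γ.Nodup) (hhead : γ.head? = some (v + (1, 0), .b0))
    (hlast : γ.getLast? = some (v, .a0)) : AdmitsCycleWith T a b := by
  have hlen := four_le_length_of_isPath hγ hhead hlast
  obtain ⟨γ', rfl⟩ : ∃ γ', γ = (v + (1, 0), .b0) :: γ' := by
    cases γ <;> simp_all
  have hinA : ∀ c ∈ (v + (1, 0), .b0) :: γ', c.2.inA T :=
    List.IsChain.induction _ _ hγ.isChain
      (fun _ _ hxy _ => (sigmaAB_ruleVec_isSome_iff.1 hxy).2.1) fun _ => trivial
  obtain ⟨γ₀, hγ₀⟩ := List.getLast?_eq_some_iff.1 hlast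
  let f : (ℤ × ℤ) × LetterAB C → (ℤ × ℤ) × WangTile C := fun c => (c.1, c.2.toTile a b)
  let l := ((v, .a0) :: (v + (1, 0), .b0) :: γ').map f
  rw [admitsCycleWith_iff]
  refine ⟨l.length, _, _, isTileCycle_of_list (f (v, .a0)) ?_ ?_ ?_ ?_ ?_, rfl, rfl, rfl⟩
  · simp only [l, List.length_map, List.length_cons] at hlen ⊢
    omega
  · simp only [l, List.mem_map]
    rintro _ ⟨c, hc, rfl⟩
    rcases List.mem_cons.1 hc with rfl | hc
    · exact ha
    · exact LetterAB.toTile_mem ha hb (hinA c hc)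
  · have hperm : ((v, .a0) :: ((v + (1, 0), .b0) :: γ').dropLast).Perm
        ((v + (1, 0), .b0) :: γ') := by
      rw [hγ₀, List.dropLast_concat]
      exact (List.perm_append_singleton _ _).symm
    have := (hperm.map Prod.fst).nodup_iff.2 (hnodup.map_on fun x hx y hy => hγ.2.2 x hx y hy)
    convert this using 1
    simp only [l, ← List.map_dropLast, List.map_map]
    rfl
  · rw [List.getLast?_map, List.getLast?_cons_cons, hlast]
    rfl
  · rw [List.isChain_map, List.isChain_cons_cons]
    refine ⟨Or.inl ⟨add_sub_cancel_left v _, hab⟩, hγ.isChain.imp fun _ _ h => ?_⟩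
    exact (sigmaAB_ruleVec_isSome_iff.1 h).2.2.1

/-- `m` is the closing index of the cycle, identified with `0`. -/
def cycleCell (t : ℕ → WangTile C) (p : ℕ → ℤ × ℤ) (m j : ℕ) : (ℤ × ℤ) × LetterAB C :=
  (p j, if j = 1 then .b0 else if j = m then .a0 else .tile (t j))

namespace IsTileCycle

variable {n : ℕ} {t : ℕ → WangTile C} {p : ℕ → ℤ × ℤ}

theorem toTile_cycleCell (h : IsTileCycle T n t p) (h0 : t 0 = a) (h1 : t 1 = b) (j : ℕ) :
    (cycleCell t p (n - 1) j).2.toTile a b = t j := by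
  unfold cycleCell
  split_ifs with hj1 hjm
  · exact hj1 ▸ h1.symm
  · exact hjm ▸ (h.tile_last.trans h0).symm
  · rfl

theorem inA_cycleCell (h : IsTileCycle T n t p) {j : ℕ} (hj : j ≤ n - 1) :
    (cycleCell t p (n - 1) j).2.inA T := by
  unfold cycleCell
  split_ifs
  · trivial
  · trivial
  · exact h.mem j (by omega)

theorem ruleVec_cycleCell_isSome (h : IsTileCycle T n t p) (h0 : t 0 = a) (h1 : t 1 = b)
    {j : ℕ} (hjm : j + 1 ≤ n - 1) :
    ((sigmaAB T a b).ruleVec (cycleCell t p (n - 1) j)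
      (cycleCell t p (n - 1) (j + 1))).isSome := by
  have := h.five_le
  rw [sigmaAB_ruleVec_isSome_iff, h.toTile_cycleCell h0 h1, h.toTile_cycleCell h0 h1]
  refine ⟨h.inA_cycleCell (by omega), h.inA_cycleCell hjm, h.wangMatch j (by omega), ?_, ?_⟩ <;>
    simp only [cycleCell] <;> split_ifs <;> simp <;> omega

theorem eq_of_pos_eq (h : IsTileCycle T n t p) {j k : ℕ} (hj : 1 ≤ j) (hjn : j ≤ n - 1)
    (hk : 1 ≤ k) (hkn : k ≤ n - 1) (hp : p j = p k) : j = k := by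
  rcases hjn.lt_or_eq with hjn | rfl <;> rcases hkn.lt_or_eq with hkn | rfl
  · exact h.pos_inj j hjn k hkn hp
  · have := h.pos_inj j hjn 0 (by omega) (hp.trans h.pos_last)
    omega
  · have := h.pos_inj 0 (by omega) k hkn (h.pos_last.symm.trans hp)
    omega
  · rfl

theorem exists_a0_b0 (h : IsTileCycle T n t p) (h0 : t 0 = a) (h1 : t 1 = b)
    (hp : p 1 = p 0 + (1, 0)) :
    ∃ P : Finset ((ℤ × ℤ) × LetterAB C), IsPattern P ∧ (sigmaAB T a b).Covered P ∧
      ∃ v : ℤ × ℤ, (v, .a0) ∈ P ∧ (v + (1, 0), .b0) ∈ P := by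
  have := h.five_le
  let γ := (List.range' 1 (n - 1)).map (cycleCell t p (n - 1))
  have hmem : ∀ j, 1 ≤ j → j ≤ n - 1 → cycleCell t p (n - 1) j ∈ γ := fun j hj hjn =>
    List.mem_map_of_mem (List.mem_range'_1.2 ⟨hj, by omega⟩)
  have hγ : (sigmaAB T a b).IsPath γ := by
    refine ⟨by simp [γ]; omega, ?_, ?_⟩
    · refine (List.isChain_map _).2 ((List.isChain_range' 1 _ 1).imp_of_mem_imp ?_)
      rintro j _ - hj rfl
      rw [List.mem_range'_1] at hj
      exact h.ruleVec_cycleCell_isSome h0 h1 (by omega)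
    · simp only [γ, List.mem_map, List.mem_range'_1]
      rintro _ ⟨j, hj, rfl⟩ _ ⟨k, hk, rfl⟩ hjk
      rw [h.eq_of_pos_eq hj.1 (by omega) hk.1 (by omega) hjk]
  refine ⟨γ.toFinset, fun c hc c' hc' => hγ.2.2 c (List.mem_toFinset.1 hc) c'
    (List.mem_toFinset.1 hc'), Subst.covered_toFinset hγ, p 0, ?_, ?_⟩
  · convert List.mem_toFinset.2 (hmem (n - 1) (by omega) le_rfl) using 1
    simp [cycleCell, h.pos_last, show n - 1 ≠ 1 by omega]
  · convert List.mem_toFinset.2 (hmem 1 le_rfl (by omega)) using 1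
    simp [cycleCell, hp]

end IsTileCycle

end

/-- Theorem `undnono`, reduction.  Let `a, b ∈ T` be
horizontally matching Wang tiles.  The substitution `σ_{a,b}` is overlapping
if and only if `T` admits a valid tiling of a cycle in which a copy of `b`
sits immediately to the right of a copy of `a`. -/
theorem sigmaAB_overlapping_iff {C : Type*} (T : Finset (WangTile C))
    (a b : WangTile C) (ha : a ∈ T) (hb : b ∈ T) (hab : a.east = b.west) :
    ¬ (sigmaAB T a b).NonOverlapping ↔ AdmitsCycleWith T a b := by
  rw [sigmaAB_not_nonOverlapping_iff]
  constructor
  · rintro ⟨P, -, hcov, v, hva, hvb⟩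
    obtain ⟨γ, hγ, hhead, hlast⟩ := hcov _ hvb _ hva
    obtain ⟨δ, hδ, hnodup, hδhead, hδlast⟩ := hγ.1.exists_nodup
    exact admitsCycleWith_of_isPath ha hb hab hδ hnodup (hδhead.trans hhead)
      (hδlast.trans hlast)
  · intro hcycle
    obtain ⟨n, t, p, hc, h0, h1, hp⟩ := admitsCycleWith_iff.1 hcycle
    exact hc.exists_a0_b0 h0 h1 hp
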